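/- arXiv:1209.4061 — 4 statements merged into one kernel-verified Lean document; each statement's English description precedes it below -/
import Mathlib

section
/- Let g, h : A* → Σ* be binary morphisms such that exactly one of g and h is periodic. Then E(g,h) = α* = {αⁿ : n ≥ 0} for some word α ∈ A*. -/
/-- The two-letter alphabet `A = {a, b}`. -/
inductive Ltr : Type
  | a : Ltr
  | b : Ltr
  deriving DecidableEq

/-- Apply a morphism (given by the images of the letters) to a word. -/
def mapp {α σ : Type*} (g : α → List σ) (w : List α) : List σ :=
  (w.map g).flatten

/-- The `n`-th power `tⁿ` of a word `t`. -/
def npow {σ : Type*} (t : List σ) (n : ℕ) : List σ :=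
  (List.replicate n t).flatten

/-- A binary morphism is periodic if all images of letters are powers of a common word. -/
def Periodic {σ : Type*} (g : Ltr → List σ) : Prop :=
  ∃ t : List σ, ∀ x : Ltr, ∃ n : ℕ, g x = npow t n

/-- The equality set `E(g,h)`. -/
def EqSet {σ : Type*} (g h : Ltr → List σ) : Set (List Ltr) :=
  {u | mapp g u = mapp h u}

/-- `u` is a minimal element of `E(g,h)`: nonempty, in `E(g,h)`, and not a product of two
nonempty elements of `E(g,h)`. -/
def MinEl {σ : Type*} (g h : Ltr → List σ) (u : List Ltr) : Prop :=
  u ≠ [] ∧ u ∈ EqSet g h ∧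
    ∀ v w : List Ltr, v ≠ [] → w ≠ [] → v ∈ EqSet g h → w ∈ EqSet g h → u ≠ v ++ w

/-- The submonoid of the free monoid generated by a set `S` of words. -/
def gen {α : Type*} (S : Set (List α)) : Set (List α) :=
  {u | ∃ l : List (List α), (∀ v ∈ l, v ∈ S) ∧ u = l.flatten}

/-- A binary morphism is marked if the images of the two letters are nonempty and
begin with different letters. -/
def Marked {σ : Type*} (g : Ltr → List σ) : Prop :=
  g Ltr.a ≠ [] ∧ g Ltr.b ≠ [] ∧ (g Ltr.a).head? ≠ (g Ltr.b).head?

open Classical in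
/-- Longest common prefix of two words. -/
noncomputable def lcp {σ : Type*} : List σ → List σ → List σ
  | x :: xs, y :: ys => if x = y then x :: lcp xs ys else []
  | _, _ => []

/-- `z_h`: the longest common prefix of `h(ab)` and `h(ba)`. -/
noncomputable def zh {σ : Type*} (h : Ltr → List σ) : List σ :=
  lcp (h Ltr.a ++ h Ltr.b) (h Ltr.b ++ h Ltr.a)

/-- `z̄_h`: the longest common suffix of `h(ab)` and `h(ba)`. -/
noncomputable def zbar {σ : Type*} (h : Ltr → List σ) : List σ :=
  (lcp (h Ltr.a ++ h Ltr.b).reverse ((h Ltr.b ++ h Ltr.a).reverse)).reverse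

/-- Componentwise concatenation in `Δ* × Δ*`. -/
def pprod {α : Type*} (p q : List α × List α) : List α × List α :=
  (p.1 ++ q.1, p.2 ++ q.2)

/-- The coincidence set `I(g,h) = {(u,v) | g(u) = h(v)}`. -/
def CoinSet {α σ : Type*} (g h : α → List σ) : Set (List α × List α) :=
  {p | mapp g p.1 = mapp h p.2}

/-- Minimal elements of the coincidence set: elements other than `(ε,ε)` that are not
a product of two elements of `I(g,h) \ {(ε,ε)}`. -/
def MinCoin {α σ : Type*} (g h : α → List σ) (p : List α × List α) : Prop :=
  p ≠ ([], []) ∧ p ∈ CoinSet g h ∧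
    ¬ ∃ q r : List α × List α, q ≠ ([], []) ∧ r ≠ ([], []) ∧
      q ∈ CoinSet g h ∧ r ∈ CoinSet g h ∧ p = pprod q r

/-- `(e,f)` is a block of `(g,h)`: nonempty words with `z_h·g(e) = h(f)·z_h`, minimal
with this property. -/
def MinBlock {σ : Type*} (g h : Ltr → List σ) (e f : List Ltr) : Prop :=
  e ≠ [] ∧ f ≠ [] ∧ zh h ++ mapp g e = mapp h f ++ zh h ∧
    ∀ u v : List Ltr, u <+: e → v <+: f →
      zh h ++ mapp g u = mapp h v ++ zh h → (u = [] ∧ v = []) ∨ (u = e ∧ v = f)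

/-- `e` is a nonempty word with `z_h·g(e) = h(e)·z_h`, minimal with this property. -/
def MinEqBlock {σ : Type*} (g h : Ltr → List σ) (e : List Ltr) : Prop :=
  e ≠ [] ∧ zh h ++ mapp g e = mapp h e ++ zh h ∧
    ∀ e₁ : List Ltr, e₁ <+: e → zh h ++ mapp g e₁ = mapp h e₁ ++ zh h →
      e₁ = [] ∨ e₁ = e

/-- The binary morphism sending `a ↦ x` and `b ↦ y`. -/
def two {σ : Type*} (x y : List σ) : Ltr → List σ
  | Ltr.a => x
  | Ltr.b => y

/-- A counterexample: the minimal generating set of `E(g,h)` has at least two elements,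
`g` is marked, `h` is not marked, `|g(a)| > |h(a)|` and `|g(b)| < |h(b)|`. -/
def Counterexample {σ : Type*} (g h : Ltr → List σ) : Prop :=
  (∃ α β : List Ltr, MinEl g h α ∧ MinEl g h β ∧ α ≠ β) ∧
  Marked g ∧ ¬ Marked h ∧
  (h Ltr.a).length < (g Ltr.a).length ∧ (g Ltr.b).length < (h Ltr.b).length

/-!
If `h` is periodic with period `t`, then `g(u) = h(u) ∈ t*` for every `u ∈ E(g,h)`, so the
`g`-images of any two elements of `E(g,h)` commute. A nonperiodic binary morphism is injective
(the defect theorem for two words: if `x{x,y}*` and `y{x,y}*` meet then `xy = yx`, by induction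
on `|x| + |y|` after replacing `y = xz` by `z`), hence any two elements of `E(g,h)` commute.
Since `E(g,h)` is a submonoid closed under left quotients, its shortest nonempty element `ρ` is
then a prefix of every nonempty `u ∈ E(g,h)`, and peeling off `ρ` shows `E(g,h) = ρ*`.
-/

namespace Word

variable {α σ : Type*}

theorem npow_succ (t : List σ) (n : ℕ) : npow t (n + 1) = t ++ npow t n := by
  simp [npow, List.replicate_succ]

theorem npow_add (t : List σ) (m n : ℕ) : npow t (m + n) = npow t m ++ npow t n := by
  rw [npow, npow, npow, List.replicate_add, List.flatten_append]

theorem npow_nil (n : ℕ) : npow ([] : List σ) n = [] := by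
  simp [npow]

theorem mapp_cons (f : α → List σ) (c : α) (u : List α) :
    mapp f (c :: u) = f c ++ mapp f u := by
  simp [mapp]

theorem mapp_append (f : α → List σ) (u v : List α) :
    mapp f (u ++ v) = mapp f u ++ mapp f v := by
  simp [mapp]

theorem mapp_mem_gen (f : Ltr → List σ) (u : List Ltr) : mapp f u ∈ gen {f Ltr.a, f Ltr.b} :=
  ⟨u.map f, fun v hv => by
    obtain ⟨c, -, rfl⟩ := List.mem_map.mp hv
    cases c <;> simp, rfl⟩

theorem nil_mem_gen (S : Set (List α)) : [] ∈ gen S :=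
  ⟨[], by simp, rfl⟩

theorem mem_gen_of_mem {S : Set (List α)} {v : List α} (hv : v ∈ S) : v ∈ gen S :=
  ⟨[v], by simpa using hv, by simp⟩

theorem append_mem_gen {S : Set (List α)} {u v : List α} (hu : u ∈ gen S) (hv : v ∈ gen S) :
    u ++ v ∈ gen S := by
  obtain ⟨l₁, hl₁, rfl⟩ := hu
  obtain ⟨l₂, hl₂, rfl⟩ := hv
  refine ⟨l₁ ++ l₂, fun w hw => ?_, by simp⟩
  exact (List.mem_append.mp hw).elim (hl₁ w) (hl₂ w)

theorem gen_subset_gen {S T : Set (List α)} (h : S ⊆ gen T) : gen S ⊆ gen T := by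
  rintro _ ⟨l, hl, rfl⟩
  induction l with
  | nil => exact nil_mem_gen T
  | cons v l ih =>
    simpa using append_mem_gen (h (hl v List.mem_cons_self))
      (ih fun w hw => hl w (List.mem_cons_of_mem v hw))

theorem gen_pair_append_subset (x z : List α) : gen {x, x ++ z} ⊆ gen {x, z} :=
  gen_subset_gen (Set.pair_subset (mem_gen_of_mem (by simp))
    (append_mem_gen (mem_gen_of_mem (by simp)) (mem_gen_of_mem (by simp))))

theorem eq_nil_or_exists_of_mem_gen_pair_append {x z X : List α} (hX : X ∈ gen {x, x ++ z}) :
    X = [] ∨ ∃ X' ∈ gen {x, z}, X = x ++ X' := by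
  obtain ⟨_ | ⟨v, l⟩, hl, rfl⟩ := hX
  · exact Or.inl rfl
  · have hl' : l.flatten ∈ gen {x, x ++ z} :=
      ⟨l, fun w hw => hl w (List.mem_cons_of_mem v hw), rfl⟩
    obtain hv | hv : v = x ∨ v = x ++ z := hl v List.mem_cons_self
    · exact Or.inr ⟨_, gen_pair_append_subset x z hl', by simp [hv]⟩
    · exact Or.inr ⟨z ++ l.flatten,
        append_mem_gen (mem_gen_of_mem (by simp)) (gen_pair_append_subset x z hl'), by simp [hv]⟩

theorem exists_npow_of_append_comm {x y : List σ} (h : x ++ y = y ++ x) :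
    ∃ t m n, x = npow t m ∧ y = npow t n := by
  induction hN : x.length + y.length using Nat.strong_induction_on generalizing x y with
  | _ N ih =>
  wlog hle : x.length ≤ y.length generalizing x y
  · obtain ⟨t, m, n, hy, hx⟩ := this h.symm (by omega) (by omega)
    exact ⟨t, n, m, hx, hy⟩
  rcases eq_or_ne x [] with rfl | hx
  · exact ⟨y, 0, 1, rfl, by simp [npow]⟩
  obtain ⟨z, rfl⟩ : x <+: y :=
    List.prefix_of_prefix_length_le (h ▸ List.prefix_append x y) (List.prefix_append y x) hle
  have hxz : x ++ z = z ++ x := by simpa using h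
  obtain ⟨t, m, n, rfl, rfl⟩ :=
    ih _ (by simp [← hN, List.length_pos_iff.mpr hx]) hxz rfl
  exact ⟨t, m, m + n, rfl, (npow_add t m n).symm⟩

theorem append_comm_of_append_eq_append {x y X Y : List σ} (hX : X ∈ gen {x, y})
    (hY : Y ∈ gen {x, y}) (h : x ++ X = y ++ Y) : x ++ y = y ++ x := by
  induction hN : x.length + y.length using Nat.strong_induction_on
    generalizing x y X Y with
  | _ N ih =>
  wlog hle : x.length ≤ y.length generalizing x y X Y
  · rw [Set.pair_comm] at hX hY
    exact (this hY hX h.symm (by omega) (by omega)).symm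
  rcases eq_or_ne x [] with rfl | hx
  · simp
  obtain ⟨z, rfl⟩ : x <+: y :=
    List.prefix_of_prefix_length_le (h ▸ List.prefix_append x X) (List.prefix_append y Y) hle
  have hXz : X = z ++ Y := by simpa using h
  rcases eq_nil_or_exists_of_mem_gen_pair_append hX with rfl | ⟨X', hX', rfl⟩
  · obtain rfl : z = [] := (List.append_eq_nil_iff.mp hXz.symm).1
    simp
  have hxz : x ++ z = z ++ x :=
    ih _ (by simp [← hN, List.length_pos_iff.mpr hx]) hX' (gen_pair_append_subset x z hY) hXz rfl
  rw [List.append_assoc, ← hxz]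

theorem append_ne_append_of_not_periodic {f : Ltr → List σ} (hf : ¬ Periodic f) :
    f Ltr.a ++ f Ltr.b ≠ f Ltr.b ++ f Ltr.a := by
  intro hcomm
  obtain ⟨t, m, n, hm, hn⟩ := exists_npow_of_append_comm hcomm
  exact hf ⟨t, fun c => by cases c; exacts [⟨m, hm⟩, ⟨n, hn⟩]⟩

theorem ne_nil_of_append_ne_append {f : Ltr → List σ}
    (hf : f Ltr.a ++ f Ltr.b ≠ f Ltr.b ++ f Ltr.a) (c : Ltr) : f c ≠ [] := by
  intro hc
  cases c <;> simp [hc] at hf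

theorem mapp_injective {f : Ltr → List σ} (hf : f Ltr.a ++ f Ltr.b ≠ f Ltr.b ++ f Ltr.a) :
    Function.Injective (mapp f) := by
  intro u
  induction u with
  | nil =>
    rintro (_ | ⟨d, v⟩) h
    · rfl
    · exact absurd (List.append_eq_nil_iff.mp (mapp_cons f d v ▸ h).symm).1
        (ne_nil_of_append_ne_append hf d)
  | cons c u ih =>
    rintro (_ | ⟨d, v⟩) h
    · exact absurd (List.append_eq_nil_iff.mp (mapp_cons f c u ▸ h)).1
        (ne_nil_of_append_ne_append hf c)
    rw [mapp_cons, mapp_cons] at h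
    have hu := mapp_mem_gen f u
    have hv := mapp_mem_gen f v
    cases c <;> cases d
    · rw [ih (List.append_cancel_left h)]
    · exact absurd (append_comm_of_append_eq_append hu hv h) hf
    · rw [Set.pair_comm] at hu hv
      exact absurd (append_comm_of_append_eq_append hu hv h).symm hf
    · rw [ih (List.append_cancel_left h)]

theorem exists_mapp_eq_npow_of_periodic {f : Ltr → List σ} (hf : Periodic f) :
    ∃ t : List σ, ∀ u, ∃ n, mapp f u = npow t n := by
  obtain ⟨t, ht⟩ := hf
  refine ⟨t, fun u => ?_⟩
  induction u with
  | nil => exact ⟨0, rfl⟩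
  | cons c u ih =>
    obtain ⟨k, hk⟩ := ht c
    obtain ⟨n, hn⟩ := ih
    exact ⟨k + n, by rw [mapp_cons, hk, hn, npow_add]⟩

theorem exists_eq_setOf_npow (S : Set (List α)) (hnil : [] ∈ S)
    (happend : ∀ u v, u ∈ S → v ∈ S → u ++ v ∈ S)
    (hquot : ∀ u w, u ∈ S → u ++ w ∈ S → w ∈ S)
    (hcomm : ∀ u v, u ∈ S → v ∈ S → u ++ v = v ++ u) :
    ∃ ρ, S = {u | ∃ n, u = npow ρ n} := by
  by_cases hS : ∃ u ∈ S, u ≠ []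
  swap
  · push Not at hS
    refine ⟨[], Set.ext fun u => ⟨fun hu => ⟨0, hS u hu⟩, ?_⟩⟩
    rintro ⟨n, rfl⟩
    rwa [npow_nil]
  obtain ⟨ρ, ⟨hρS, hρ⟩, hmin⟩ :=
    (measure List.length).wf.has_min {u | u ∈ S ∧ u ≠ []} hS
  refine ⟨ρ, Set.ext fun u => ⟨fun hu => ?_, ?_⟩⟩
  · induction hN : u.length using Nat.strong_induction_on generalizing u with
    | _ N ih =>
    rcases eq_or_ne u [] with rfl | hu₀
    · exact ⟨0, rfl⟩
    obtain ⟨w, rfl⟩ : ρ <+: u :=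
      List.prefix_of_prefix_length_le (hcomm u ρ hu hρS ▸ List.prefix_append ρ u)
        (List.prefix_append u ρ) (not_lt.mp (hmin u ⟨hu, hu₀⟩))
    obtain ⟨n, rfl⟩ := ih w.length (by simp [← hN, List.length_pos_iff.mpr hρ]) w
      (hquot ρ w hρS hu) rfl
    exact ⟨n + 1, (npow_succ ρ n).symm⟩
  · rintro ⟨n, rfl⟩
    induction n with
    | zero => exact hnil
    | succ n ih => exact npow_succ ρ n ▸ happend ρ _ hρS ih

theorem eqSet_comm (g h : Ltr → List σ) : EqSet g h = EqSet h g :=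
  Set.ext fun _ => eq_comm

theorem append_mem_eqSet {g h : Ltr → List σ} {u v : List Ltr} (hu : u ∈ EqSet g h)
    (hv : v ∈ EqSet g h) : u ++ v ∈ EqSet g h := by
  simp only [EqSet, Set.mem_ofPred_eq, mapp_append] at *
  rw [hu, hv]

theorem mem_eqSet_of_append_mem {g h : Ltr → List σ} {u w : List Ltr} (hu : u ∈ EqSet g h)
    (huw : u ++ w ∈ EqSet g h) : w ∈ EqSet g h := by
  simp only [EqSet, Set.mem_ofPred_eq, mapp_append] at *
  rw [hu] at huw
  exact List.append_cancel_left huw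

theorem append_comm_of_mem_eqSet {g h : Ltr → List σ} (hg : ¬ Periodic g) (hh : Periodic h)
    {u v : List Ltr} (hu : u ∈ EqSet g h) (hv : v ∈ EqSet g h) : u ++ v = v ++ u := by
  obtain ⟨t, ht⟩ := exists_mapp_eq_npow_of_periodic hh
  obtain ⟨m, hm⟩ := ht u
  obtain ⟨n, hn⟩ := ht v
  apply mapp_injective (append_ne_append_of_not_periodic hg)
  rw [mapp_append, mapp_append, hu, hv, hm, hn, ← npow_add, ← npow_add, Nat.add_comm]

theorem exists_eqSet_eq_setOf_npow {g h : Ltr → List σ} (hg : ¬ Periodic g) (hh : Periodic h) :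
    ∃ ρ, EqSet g h = {u | ∃ n, u = npow ρ n} :=
  exists_eq_setOf_npow _ rfl (fun _ _ => append_mem_eqSet) (fun _ _ => mem_eqSet_of_append_mem)
    (fun _ _ => append_comm_of_mem_eqSet hg hh)

end Word

/-- If exactly one of `g`, `h` is periodic, then `E(g,h) = α*` for some
word `α`. -/
theorem stmt_3 {σ : Type*} (g h : Ltr → List σ)
    (hx : Xor' (Periodic g) (Periodic h)) :
    ∃ α : List Ltr, EqSet g h = {u : List Ltr | ∃ n : ℕ, u = npow α n} := by
  rcases hx with ⟨hg, hh⟩ | ⟨hh, hg⟩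
  · rw [Word.eqSet_comm]
    exact Word.exists_eqSet_eq_setOf_npow hh hg
  · exact Word.exists_eqSet_eq_setOf_npow hg hh
end

section
/- Let g, h : Δ* → Σ* be non-erasing morphisms. Then the coincidence set I(g,h) = {(u,v) ∈ Δ* × Δ* : g(u) = h(v)} is, as a submonoid of Δ* × Δ*, freely generated by its set i(g,h) of minimal elements: every element of I(g,h) other than (ε,ε) has a unique factorization as a product of elements of i(g,h). Moreover, i(g,h) is a bifix code: for any two distinct elements (u,v), (u',v') of i(g,h), it is not the case that u is a prefix of u' and v is a prefix of v', and it is not the case that u is a suffix of u' and v is a suffix of v'. -/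
/-! If one minimal coincidence is a componentwise prefix (or suffix) of another, the pair left
over is again a coincidence, which minimality of the larger one allows only if it is trivial: this
is the bifix property. Factorizations into minimal coincidences exist by induction on length. They
are unique because two minimal coincidences `(u, v)`, `(u', v')` that are componentwise prefixes
of the same pair are equal: if `u ≤ u'` but `v' < v` in the prefix order, then
`h(v) = g(u) ≤ g(u') = h(v')`, and as `h` is non-erasing this forces `v = v'`. -/

section Coincidence

variable {Δ σ : Type*} {g h : Δ → List σ}

theorem mapp_append (g : Δ → List σ) (u v : List Δ) :
    mapp g (u ++ v) = mapp g u ++ mapp g v := by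
  simp [mapp]

theorem mapp_eq_nil (hg : ∀ x, g x ≠ []) {u : List Δ} (hu : mapp g u = []) : u = [] := by
  cases u with
  | nil => rfl
  | cons x _ => simp [mapp, hg x] at hu

theorem mapp_isPrefix (g : Δ → List σ) {u v : List Δ} (huv : u <+: v) :
    mapp g u <+: mapp g v := by
  obtain ⟨s, rfl⟩ := huv
  rw [mapp_append]
  exact List.prefix_append _ _

theorem eq_of_isPrefix_of_mapp_isPrefix (hg : ∀ x, g x ≠ []) {u v : List Δ} (huv : u <+: v)
    (hvu : mapp g v <+: mapp g u) : u = v := by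
  obtain ⟨s, rfl⟩ := huv
  have hlen := hvu.length_le
  rw [mapp_append, List.length_append] at hlen
  have hs : s = [] := mapp_eq_nil hg (List.eq_nil_of_length_eq_zero (by omega))
  rw [hs, List.append_nil]

theorem pprod_assoc (p q r : List Δ × List Δ) :
    pprod (pprod p q) r = pprod p (pprod q r) := by
  simp [pprod]

theorem foldr_pprod_append (l₁ l₂ : List (List Δ × List Δ)) :
    (l₁ ++ l₂).foldr pprod ([], []) =
      pprod (l₁.foldr pprod ([], [])) (l₂.foldr pprod ([], [])) := by
  induction l₁ with
  | nil => simp [pprod]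
  | cons p l ih => rw [List.cons_append, List.foldr_cons, List.foldr_cons, ih, pprod_assoc]

theorem pprod_eq_nil_iff {p q : List Δ × List Δ} :
    pprod p q = ([], []) ↔ p = ([], []) ∧ q = ([], []) := by
  simp only [pprod, List.append_eq_nil_iff, Prod.ext_iff]
  tauto

theorem mem_coinSet_of_pprod_mem_left {p r : List Δ × List Δ} (hp : p ∈ CoinSet g h)
    (hpr : pprod p r ∈ CoinSet g h) : r ∈ CoinSet g h := by
  simp only [CoinSet, Set.mem_ofPred_eq, pprod, mapp_append] at hp hpr ⊢
  rw [hp] at hpr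
  exact List.append_cancel_left hpr

theorem mem_coinSet_of_pprod_mem_right {p r : List Δ × List Δ} (hr : r ∈ CoinSet g h)
    (hpr : pprod p r ∈ CoinSet g h) : p ∈ CoinSet g h := by
  simp only [CoinSet, Set.mem_ofPred_eq, pprod, mapp_append] at hr hpr ⊢
  rw [hr] at hpr
  exact List.append_cancel_right hpr

namespace MinCoin

theorem eq_of_isPrefix {p q : List Δ × List Δ} (hp : MinCoin g h p) (hq : MinCoin g h q)
    (h₁ : p.1 <+: q.1) (h₂ : p.2 <+: q.2) : p = q := by
  obtain ⟨r₁, hr₁⟩ := h₁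
  obtain ⟨r₂, hr₂⟩ := h₂
  have hq_eq : q = pprod p (r₁, r₂) := Prod.ext hr₁.symm hr₂.symm
  have hr : (r₁, r₂) ∈ CoinSet g h := mem_coinSet_of_pprod_mem_left hp.2.1 (hq_eq ▸ hq.2.1)
  by_contra hne
  refine hq.2.2 ⟨p, (r₁, r₂), hp.1, fun h0 => hne ?_, hp.2.1, hr, hq_eq⟩
  rw [hq_eq, h0]
  simp [pprod]

theorem eq_of_isSuffix {p q : List Δ × List Δ} (hp : MinCoin g h p) (hq : MinCoin g h q)
    (h₁ : p.1 <:+ q.1) (h₂ : p.2 <:+ q.2) : p = q := by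
  obtain ⟨r₁, hr₁⟩ := h₁
  obtain ⟨r₂, hr₂⟩ := h₂
  have hq_eq : q = pprod (r₁, r₂) p := Prod.ext hr₁.symm hr₂.symm
  have hr : (r₁, r₂) ∈ CoinSet g h := mem_coinSet_of_pprod_mem_right hp.2.1 (hq_eq ▸ hq.2.1)
  by_contra hne
  refine hq.2.2 ⟨(r₁, r₂), p, fun h0 => hne ?_, hp.1, hr, hp.2.1, hq_eq⟩
  rw [hq_eq, h0]
  simp [pprod]

theorem isPrefix_snd (hh : ∀ x, h x ≠ []) {p q : List Δ × List Δ} (hp : MinCoin g h p)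
    (hq : MinCoin g h q) (h₁ : p.1 <+: q.1) (h₂ : p.2 <+: q.2 ∨ q.2 <+: p.2) :
    p.2 <+: q.2 := by
  rcases h₂ with h₂ | h₂
  · exact h₂
  · have himage : mapp h p.2 <+: mapp h q.2 := by
      rw [← hp.2.1, ← hq.2.1]
      exact mapp_isPrefix g h₁
    rw [eq_of_isPrefix_of_mapp_isPrefix hh h₂ himage]

theorem eq_of_pprod_eq (hh : ∀ x, h x ≠ []) {p q r s : List Δ × List Δ}
    (hp : MinCoin g h p) (hq : MinCoin g h q) (he : pprod p r = pprod q s) : p = q := by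
  simp only [pprod, Prod.mk.injEq] at he
  have h₁ : p.1 <+: q.1 ∨ q.1 <+: p.1 :=
    List.prefix_or_prefix_of_prefix (List.prefix_append p.1 r.1)
      (he.1 ▸ List.prefix_append q.1 s.1)
  have h₂ : p.2 <+: q.2 ∨ q.2 <+: p.2 :=
    List.prefix_or_prefix_of_prefix (List.prefix_append p.2 r.2)
      (he.2 ▸ List.prefix_append q.2 s.2)
  rcases h₁ with h₁ | h₁
  · exact hp.eq_of_isPrefix hq h₁ (hp.isPrefix_snd hh hq h₁ h₂)
  · exact (hq.eq_of_isPrefix hp h₁ (hq.isPrefix_snd hh hp h₁ h₂.symm)).symm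

end MinCoin

theorem length_add_length_pos {p : List Δ × List Δ} (hp : p ≠ ([], [])) :
    0 < p.1.length + p.2.length := by
  by_contra! h0
  exact hp (Prod.ext (List.eq_nil_of_length_eq_zero (by omega))
    (List.eq_nil_of_length_eq_zero (by omega)))

theorem exists_minCoin_factorization {p : List Δ × List Δ} (hp : p ∈ CoinSet g h)
    (hne : p ≠ ([], [])) :
    ∃ l : List (List Δ × List Δ), (∀ q ∈ l, MinCoin g h q) ∧ p = l.foldr pprod ([], []) := by
  by_cases hmin : MinCoin g h p
  · exact ⟨[p], by simpa using hmin, by simp [pprod]⟩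
  obtain ⟨q, r, hq0, hr0, hq, hr, hpqr⟩ : ∃ q r : List Δ × List Δ,
      q ≠ ([], []) ∧ r ≠ ([], []) ∧ q ∈ CoinSet g h ∧ r ∈ CoinSet g h ∧ p = pprod q r := by
    simpa [MinCoin, hne, hp] using hmin
  obtain ⟨lq, hlq, rfl⟩ := exists_minCoin_factorization hq hq0
  obtain ⟨lr, hlr, rfl⟩ := exists_minCoin_factorization hr hr0
  refine ⟨lq ++ lr, fun q hq => ?_, hpqr.trans (foldr_pprod_append lq lr).symm⟩
  rcases List.mem_append.mp hq with hq | hq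
  exacts [hlq q hq, hlr q hq]
termination_by p.1.length + p.2.length
decreasing_by
  all_goals
    simp only [hpqr, pprod, List.length_append]
    have := length_add_length_pos hq0
    have := length_add_length_pos hr0
    omega

theorem minCoin_factorization_unique (hh : ∀ x, h x ≠ []) :
    ∀ {l₁ l₂ : List (List Δ × List Δ)}, (∀ q ∈ l₁, MinCoin g h q) →
      (∀ q ∈ l₂, MinCoin g h q) → l₁.foldr pprod ([], []) = l₂.foldr pprod ([], []) → l₁ = l₂
  | [], [], _, _, _ => rfl
  | [], q :: _, _, h₂, he =>
    absurd (pprod_eq_nil_iff.mp he.symm).1 (h₂ q List.mem_cons_self).1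
  | q :: _, [], h₁, _, he =>
    absurd (pprod_eq_nil_iff.mp he).1 (h₁ q List.mem_cons_self).1
  | q₁ :: l₁, q₂ :: l₂, h₁, h₂, he => by
    have hq : q₁ = q₂ :=
      (h₁ q₁ List.mem_cons_self).eq_of_pprod_eq hh (h₂ q₂ List.mem_cons_self) he
    subst hq
    simp only [List.foldr_cons, pprod, Prod.mk.injEq, List.append_cancel_left_eq] at he
    rw [minCoin_factorization_unique hh (fun q hq => h₁ q (List.mem_cons_of_mem _ hq))
      (fun q hq => h₂ q (List.mem_cons_of_mem _ hq)) (Prod.ext he.1 he.2)]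

end Coincidence

theorem stmt_6_general {Δ σ : Type*} (g h : Δ → List σ)
    (hh : ∀ x : Δ, h x ≠ []) :
    (∀ p ∈ CoinSet g h, p ≠ ([], []) →
      ∃! l : List (List Δ × List Δ),
        (∀ q ∈ l, MinCoin g h q) ∧ p = l.foldr pprod ([], [])) ∧
    (∀ p q : List Δ × List Δ, MinCoin g h p → MinCoin g h q → p ≠ q →
      ¬ (p.1 <+: q.1 ∧ p.2 <+: q.2) ∧ ¬ (p.1 <:+ q.1 ∧ p.2 <:+ q.2)) := by
  refine ⟨fun p hp hne => ?_, fun p q hp hq hne => ?_⟩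
  · obtain ⟨l, hl, rfl⟩ := exists_minCoin_factorization hp hne
    exact ⟨l, ⟨hl, rfl⟩, fun l' ⟨hl', he⟩ =>
      minCoin_factorization_unique hh hl' hl he.symm⟩
  · exact ⟨fun ⟨h₁, h₂⟩ => hne (hp.eq_of_isPrefix hq h₁ h₂),
      fun ⟨h₁, h₂⟩ => hne (hp.eq_of_isSuffix hq h₁ h₂)⟩

/-- For non-erasing morphisms `g, h : Δ* → Σ*`, the coincidence set
`I(g,h)` is freely generated by its set of minimal elements, and the minimal elements
form a bifix code. -/
theorem stmt_6 {Δ σ : Type*} (g h : Δ → List σ)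
    (hg : ∀ x : Δ, g x ≠ []) (hh : ∀ x : Δ, h x ≠ []) :
    (∀ p ∈ CoinSet g h, p ≠ ([], []) →
      ∃! l : List (List Δ × List Δ),
        (∀ q ∈ l, MinCoin g h q) ∧ p = l.foldr pprod ([], [])) ∧
    (∀ p q : List Δ × List Δ, MinCoin g h p → MinCoin g h q → p ≠ q →
      ¬ (p.1 <+: q.1 ∧ p.2 <+: q.2) ∧ ¬ (p.1 <:+ q.1 ∧ p.2 <:+ q.2)) :=
  stmt_6_general g h hh
end

section
/- Let g and h be binary morphisms A* → Σ*, and let g be marked. Let u ∈ A* be a word such that g(u) and h(u) are prefix-comparable and g(u) ≠ h(u)·z_h. Let u₁, u₂ ∈ A⁺ be nonempty words such that g(u·u₁) = h(u·u₁) and g(u·u₂) = h(u·u₂). Then the first letter of u₁ equals the first letter of u₂. -/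
namespace S11

lemma mapp_nil {α σ : Type*} (g : α → List σ) : mapp g [] = [] := rfl

lemma mapp_cons {α σ : Type*} (g : α → List σ) (x : α) (w : List α) :
    mapp g (x :: w) = g x ++ mapp g w := by simp [mapp]

lemma mapp_append {α σ : Type*} (g : α → List σ) (v w : List α) :
    mapp g (v ++ w) = mapp g v ++ mapp g w := by simp [mapp]

open Classical in
lemma lcp_cons_cons {σ : Type*} (x y : σ) (xs ys : List σ) :
    lcp (x::xs) (y::ys) = if x = y then x :: lcp xs ys else [] := by
  simp [lcp]

lemma lcp_nil_left {σ : Type*} (y : List σ) : lcp ([] : List σ) y = [] := by simp [lcp]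

lemma lcp_nil_right {σ : Type*} (x : List σ) : lcp x ([] : List σ) = [] := by
  cases x <;> simp [lcp]

lemma lcp_comm {σ : Type*} : ∀ x y : List σ, lcp x y = lcp y x
  | [], y => by rw [lcp_nil_left, lcp_nil_right]
  | x, [] => by rw [lcp_nil_left, lcp_nil_right]
  | x::xs, y::ys => by
    rw [lcp_cons_cons, lcp_cons_cons, lcp_comm xs ys]
    by_cases h : x = y <;> simp [h, Ne.symm, eq_comm]

lemma lcp_prefix_left {σ : Type*} : ∀ x y : List σ, lcp x y <+: x
  | [], y => by simp [lcp_nil_left]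
  | x, [] => by simp [lcp_nil_right]
  | x::xs, y::ys => by
    rw [lcp_cons_cons]
    split_ifs with h
    · exact List.cons_prefix_cons.mpr ⟨rfl, lcp_prefix_left xs ys⟩
    · simp

lemma lcp_prefix_right {σ : Type*} (x y : List σ) : lcp x y <+: y := by
  rw [lcp_comm]; exact lcp_prefix_left y x

lemma prefix_lcp {σ : Type*} : ∀ p x y : List σ, p <+: x → p <+: y → p <+: lcp x y
  | [], _, _, _, _ => by simp
  | c::p, x, y, hx, hy => by
    obtain ⟨x', rfl⟩ : ∃ x', x = c :: x' := by
      cases x with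
      | nil => simp at hx
      | cons a t => obtain ⟨rfl, -⟩ := List.cons_prefix_cons.mp hx; exact ⟨t, rfl⟩
    obtain ⟨y', rfl⟩ : ∃ y', y = c :: y' := by
      cases y with
      | nil => simp at hy
      | cons a t => obtain ⟨rfl, -⟩ := List.cons_prefix_cons.mp hy; exact ⟨t, rfl⟩
    rw [lcp_cons_cons, if_pos rfl]
    exact List.cons_prefix_cons.mpr ⟨rfl,
      prefix_lcp p x' y' (List.cons_prefix_cons.mp hx).2 (List.cons_prefix_cons.mp hy).2⟩

lemma prefix_of_prefix_append {σ : Type*} {p s t : List σ} (h : p <+: s ++ t)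
    (hl : p.length ≤ s.length) : p <+: s := by
  have h2 : p = s.take p.length := by
    rw [List.prefix_iff_eq_take] at h
    conv_lhs => rw [h]
    rw [List.take_append_of_le_length hl]
  rw [h2]; exact List.take_prefix _ s

lemma pref_head? {σ : Type*} {x y : List σ} (h : x <+: y) (hx : x ≠ []) :
    x.head? = y.head? := by
  cases x with
  | nil => simp at hx
  | cons a t =>
    cases y with
    | nil => simp at h
    | cons b s => obtain ⟨rfl, -⟩ := List.cons_prefix_cons.mp h; rfl

lemma comm_prefix {σ : Type*} {x y : List σ} (h : x ++ y = y ++ x) :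
    x <+: y ∨ y <+: x := by
  rcases le_total x.length y.length with hl | hl
  · exact Or.inl <|
      List.prefix_of_prefix_length_le (h ▸ (List.prefix_append x y)) (List.prefix_append y x) hl
  · exact Or.inr <|
      List.prefix_of_prefix_length_le (h.symm ▸ (List.prefix_append y x)) (List.prefix_append x y) hl

lemma head?_append_left {σ : Type*} {l : List σ} (l' : List σ) (h : l ≠ []) :
    (l ++ l').head? = l.head? := by
  cases l with
  | nil => simp at h
  | cons a t => rfl

lemma eq_append_drop_of_prefix {σ : Type*} {z w : List σ} (h : z <+: w) :
    w = z ++ w.drop z.length := by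
  rw [List.prefix_iff_eq_take] at h
  conv_lhs => rw [← List.take_append_drop z.length w]
  rw [← h]

lemma lcp_conj {σ : Type*} (p q : List σ) :
    lcp (p ++ q) (q ++ p) <+: p ++ lcp (p ++ q) (q ++ p) := by
  have hz1 : lcp (p++q) (q++p) <+: p ++ q := lcp_prefix_left _ _
  have hz2 : lcp (p++q) (q++p) <+: q ++ p := lcp_prefix_right _ _
  set z := lcp (p++q) (q++p) with hzdef
  rcases le_or_gt z.length p.length with hl | hl
  · exact (prefix_of_prefix_append hz1 hl).trans (p.prefix_append z)
  · have hp : p <+: z := List.prefix_of_prefix_length_le (p.prefix_append q) hz1 hl.le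
    obtain ⟨z₂, hz⟩ := hp
    have hz2q : z₂ <+: q := (List.prefix_append_right_inj p).mp (hz ▸ hz1)
    have h22 : z₂ <+: z := by
      rcases le_or_gt q.length z.length with hq | hq
      · exact hz2q.trans (List.prefix_of_prefix_length_le (q.prefix_append p) hz2 hq)
      · exact List.prefix_of_prefix_length_le hz2q (prefix_of_prefix_append hz2 hq.le)
          (by rw [← hz]; simp)
    conv_lhs => rw [← hz]
    exact (List.prefix_append_right_inj p).mpr h22

lemma zh_pref {σ : Type*} (h : Ltr → List σ) :
    ∀ x : Ltr, zh h <+: h x ++ zh h := by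
  intro x
  cases x with
  | a => exact lcp_conj (h Ltr.a) (h Ltr.b)
  | b =>
    have : zh h = lcp (h Ltr.b ++ h Ltr.a) (h Ltr.a ++ h Ltr.b) := lcp_comm _ _
    rw [this]
    exact lcp_conj (h Ltr.b) (h Ltr.a)

lemma letter_comm {σ : Type*} {h : Ltr → List σ}
    (hper : h Ltr.a ++ h Ltr.b = h Ltr.b ++ h Ltr.a) (x y : Ltr) :
    h x ++ h y = h y ++ h x := by
  cases x <;> cases y <;> first | rfl | exact hper | exact hper.symm

lemma letter_mapp_comm {σ : Type*} {h : Ltr → List σ}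
    (hper : h Ltr.a ++ h Ltr.b = h Ltr.b ++ h Ltr.a) (x : Ltr) :
    ∀ w : List Ltr, h x ++ mapp h w = mapp h w ++ h x := by
  intro w
  induction w with
  | nil => simp [mapp_nil]
  | cons y w ih =>
    rw [mapp_cons, ← List.append_assoc, letter_comm hper x y, List.append_assoc, ih,
      ← List.append_assoc]

lemma mapp_comm {σ : Type*} {h : Ltr → List σ}
    (hper : h Ltr.a ++ h Ltr.b = h Ltr.b ++ h Ltr.a) (v w : List Ltr) :
    mapp h v ++ mapp h w = mapp h w ++ mapp h v := by
  induction v with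
  | nil => simp [mapp_nil]
  | cons x v ih =>
    rw [mapp_cons, List.append_assoc, ih, ← List.append_assoc, letter_mapp_comm hper,
      List.append_assoc]

end S11

/-- Lemma on continuations inside the equality set: if `g(u)` and `h(u)`
are comparable, `g(u) ≠ h(u)·z_h`, and `u·u₁, u·u₂ ∈ E(g,h)` with `u₁, u₂` nonempty, then
`u₁` and `u₂` start with the same letter (`g` marked). -/
theorem stmt_11 {σ : Type*} (g h : Ltr → List σ) (hg : Marked g)
    (u : List Ltr)
    (hcomp : mapp g u <+: mapp h u ∨ mapp h u <+: mapp g u)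
    (hne : mapp g u ≠ mapp h u ++ zh h)
    (u₁ u₂ : List Ltr) (h1 : u₁ ≠ []) (h2 : u₂ ≠ [])
    (e1 : mapp g (u ++ u₁) = mapp h (u ++ u₁))
    (e2 : mapp g (u ++ u₂) = mapp h (u ++ u₂)) :
    u₁.head? = u₂.head? := by
  classical
  obtain ⟨x₁, t₁, rfl⟩ := List.exists_cons_of_ne_nil h1
  obtain ⟨x₂, t₂, rfl⟩ := List.exists_cons_of_ne_nil h2
  suffices hx : x₁ = x₂ by rw [hx]; rfl
  rw [S11.mapp_append, S11.mapp_append] at e1 e2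
  -- basic facts about g
  have gl : ∀ x : Ltr, g x ≠ [] := by intro x; cases x; exacts [hg.1, hg.2.1]
  have G1ne : mapp g (x₁ :: t₁) ≠ [] := by
    rw [S11.mapp_cons]; intro hc
    exact gl x₁ (List.append_eq_nil_iff.mp hc).1
  have G2ne : mapp g (x₂ :: t₂) ≠ [] := by
    rw [S11.mapp_cons]; intro hc
    exact gl x₂ (List.append_eq_nil_iff.mp hc).1
  have gkey : (mapp g (x₁ :: t₁)).head? = (mapp g (x₂ :: t₂)).head? → x₁ = x₂ := by
    intro hhead
    rw [S11.mapp_cons, S11.mapp_cons, S11.head?_append_left _ (gl x₁),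
      S11.head?_append_left _ (gl x₂)] at hhead
    cases x₁ <;> cases x₂ <;>
      first | rfl | exact absurd hhead hg.2.2 | exact absurd hhead.symm hg.2.2
  -- reduce to the case g(u) = h(u) ++ s
  have main : ∀ s : List σ, mapp g u = mapp h u ++ s → x₁ = x₂ := by
    intro s hs
    have hu1 : mapp h (x₁ :: t₁) = s ++ mapp g (x₁ :: t₁) := by
      apply List.append_cancel_left (as := mapp h u)
      rw [← List.append_assoc, ← hs, e1]
    have hu2 : mapp h (x₂ :: t₂) = s ++ mapp g (x₂ :: t₂) := by
      apply List.append_cancel_left (as := mapp h u)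
      rw [← List.append_assoc, ← hs, e2]
    by_cases hper : h Ltr.a ++ h Ltr.b = h Ltr.b ++ h Ltr.a
    · -- periodic case: all h-images commute, hence are prefix-comparable
      have hc := S11.mapp_comm hper (x₁ :: t₁) (x₂ :: t₂)
      rcases S11.comm_prefix hc with hp | hp
      · rw [hu1, hu2] at hp
        exact gkey (S11.pref_head? ((List.prefix_append_right_inj s).mp hp) G1ne)
      · rw [hu1, hu2] at hp
        exact gkey (S11.pref_head? ((List.prefix_append_right_inj s).mp hp) G2ne).symm
    · -- non-periodic case: conjugate morphism h' with h(w) ++ z = z ++ h'(w)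
      set z := zh h with hz0
      set h' : Ltr → List σ := fun x => (h x ++ z).drop z.length with hh'
      have hxz : ∀ x, h x ++ z = z ++ h' x := fun x =>
        S11.eq_append_drop_of_prefix (S11.zh_pref h x)
      have hwz : ∀ w : List Ltr, mapp h w ++ z = z ++ mapp h' w := by
        intro w
        induction w with
        | nil => simp [S11.mapp_nil]
        | cons x w ih =>
          rw [S11.mapp_cons, S11.mapp_cons, List.append_assoc, ih, ← List.append_assoc,
            hxz x, List.append_assoc]
      have hhl : ∀ x : Ltr, h x ≠ [] := by
        intro x hc
        apply hper
        cases x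
        · rw [hc]; simp
        · rw [hc]; simp
      have h'ne : ∀ x : Ltr, h' x ≠ [] := by
        intro x
        have hlen : (h' x).length = (h x).length := by
          simp [hh']
        intro hc
        rw [hc] at hlen
        exact hhl x (List.eq_nil_of_length_eq_zero hlen.symm)
      have h'heads : (h' Ltr.a).head? ≠ (h' Ltr.b).head? := by
        intro heq
        obtain ⟨c, ra, hra⟩ := List.exists_cons_of_ne_nil (h'ne Ltr.a)
        obtain ⟨c', rb, hrb⟩ := List.exists_cons_of_ne_nil (h'ne Ltr.b)
        rw [hra, hrb] at heq
        obtain rfl : c = c' := by simpa using heq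
        have hab : (h Ltr.a ++ h Ltr.b) ++ z = z ++ (h' Ltr.a ++ h' Ltr.b) := by
          have := hwz [Ltr.a, Ltr.b]
          simpa [S11.mapp_cons, S11.mapp_nil] using this
        have hba : (h Ltr.b ++ h Ltr.a) ++ z = z ++ (h' Ltr.b ++ h' Ltr.a) := by
          have := hwz [Ltr.b, Ltr.a]
          simpa [S11.mapp_cons, S11.mapp_nil] using this
        have hcab : z ++ [c] <+: (h Ltr.a ++ h Ltr.b) ++ z := by
          rw [hab, hra]
          exact ⟨ra ++ h' Ltr.b, by simp⟩
        have hcba : z ++ [c] <+: (h Ltr.b ++ h Ltr.a) ++ z := by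
          rw [hba, hrb]
          exact ⟨rb ++ h' Ltr.a, by simp⟩
        have hzab : z <+: h Ltr.a ++ h Ltr.b := S11.lcp_prefix_left _ _
        have hzba : z <+: h Ltr.b ++ h Ltr.a := S11.lcp_prefix_right _ _
        rcases lt_or_eq_of_le hzab.length_le with hlt | heqa
        · have p1 : z ++ [c] <+: h Ltr.a ++ h Ltr.b :=
            S11.prefix_of_prefix_append hcab (by simpa using hlt)
          have p2 : z ++ [c] <+: h Ltr.b ++ h Ltr.a :=
            S11.prefix_of_prefix_append hcba (by
              simp only [List.length_append, List.length_cons, List.length_nil] at hlt ⊢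
              omega)
          have := (S11.prefix_lcp _ _ _ p1 p2).length_le
          rw [← zh] at this
          simp [← hz0] at this
        · have hzab' : z = h Ltr.a ++ h Ltr.b := hzab.eq_of_length heqa
          have hzba' : z = h Ltr.b ++ h Ltr.a := hzba.eq_of_length (by
            rw [heqa]; simp [Nat.add_comm])
          exact hper (hzab' ▸ hzba' ▸ rfl)
      have h'key : (h' x₁).head? = (h' x₂).head? → x₁ = x₂ := by
        intro hhead
        cases x₁ <;> cases x₂ <;>
          first | rfl | exact absurd hhead h'heads | exact absurd hhead.symm h'heads
      have e1' : s ++ (mapp g (x₁ :: t₁) ++ z) = z ++ mapp h' (x₁ :: t₁) := by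
        rw [← hwz, hu1, List.append_assoc]
      have e2' : s ++ (mapp g (x₂ :: t₂) ++ z) = z ++ mapp h' (x₂ :: t₂) := by
        rw [← hwz, hu2, List.append_assoc]
      rcases lt_or_ge s.length z.length with hsz | hsz
      · -- short overflow: both g-images start with the same letter of z
        have hzp1 : z <+: s ++ (mapp g (x₁ :: t₁) ++ z) := ⟨_, e1'.symm⟩
        have hzp2 : z <+: s ++ (mapp g (x₂ :: t₂) ++ z) := ⟨_, e2'.symm⟩
        have hsp : s <+: z :=
          List.prefix_of_prefix_length_le (s.prefix_append _) hzp1 hsz.le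
        obtain ⟨d, hd⟩ := hsp
        have hdne : d ≠ [] := by
          intro hc
          rw [hc, List.append_nil] at hd
          rw [hd] at hsz
          exact lt_irrefl _ hsz
        rw [← hd] at hzp1 hzp2
        have d1 := (List.prefix_append_right_inj s).mp hzp1
        have d2 := (List.prefix_append_right_inj s).mp hzp2
        apply gkey
        have q1 := S11.pref_head? d1 hdne
        have q2 := S11.pref_head? d2 hdne
        rw [S11.head?_append_left _ G1ne] at q1
        rw [S11.head?_append_left _ G2ne] at q2
        exact q1.symm.trans q2
      · -- long overflow: s = z ++ r
        have hzs : z <+: s := S11.prefix_of_prefix_append ⟨_, e1'.symm⟩ hsz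
        obtain ⟨r, hr⟩ := hzs
        by_cases hrnil : r = []
        · rw [hrnil, List.append_nil] at hr
          exact absurd (by rw [hs, ← hr]) hne
        · have m1 : mapp h' (x₁ :: t₁) = r ++ (mapp g (x₁ :: t₁) ++ z) := by
            apply List.append_cancel_left (as := z)
            rw [← e1', ← hr, List.append_assoc]
          have m2 : mapp h' (x₂ :: t₂) = r ++ (mapp g (x₂ :: t₂) ++ z) := by
            apply List.append_cancel_left (as := z)
            rw [← e2', ← hr, List.append_assoc]
          apply h'key
          rw [← S11.head?_append_left (mapp h' t₁) (h'ne x₁),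
            ← S11.head?_append_left (mapp h' t₂) (h'ne x₂), ← S11.mapp_cons, ← S11.mapp_cons,
            m1, m2, S11.head?_append_left _ hrnil, S11.head?_append_left _ hrnil]
  rcases hcomp with hle | hle
  · obtain ⟨t, ht⟩ := hle
    rcases List.eq_nil_or_concat t with rfl | _
    · exact main [] (by rw [← ht]; simp)
    · -- t ≠ [] : both g-images start with the first letter of t
      have htne : t ≠ [] := by rintro rfl; simp_all
      have hg1 : mapp g (x₁ :: t₁) = t ++ mapp h (x₁ :: t₁) := by
        apply List.append_cancel_left (as := mapp g u)
        rw [e1, ← ht, List.append_assoc]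
      have hg2 : mapp g (x₂ :: t₂) = t ++ mapp h (x₂ :: t₂) := by
        apply List.append_cancel_left (as := mapp g u)
        rw [e2, ← ht, List.append_assoc]
      apply gkey
      rw [hg1, hg2, S11.head?_append_left _ htne, S11.head?_append_left _ htne]
  · obtain ⟨s, hsv⟩ := hle
    exact main s hsv.symm
end

section
/- Let (g,h) be a counterexample. Then there exist nonempty words σ, ν_a, ν_b ∈ A⁺ such that σ contains at least one occurrence of the letter a, ν_a begins with the letter a, ν_b begins with the letter b, the words σν_a and σν_b are two distinct minimal elements of E(g,h), and g(σ) = h(σ)·z_h, z_h·g(ν_a) = h(ν_a), z_h·g(ν_b) = h(ν_b). -/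
namespace W15

@[simp] lemma mapp_nil {α σ : Type*} (g : α → List σ) : mapp g [] = [] := rfl
@[simp] lemma mapp_cons {α σ : Type*} (g : α → List σ) (c : α) (w : List α) :
    mapp g (c :: w) = g c ++ mapp g w := by simp [mapp]
@[simp] lemma mapp_append {α σ : Type*} (g : α → List σ) (u v : List α) :
    mapp g (u ++ v) = mapp g u ++ mapp g v := by simp [mapp]

@[simp] lemma npow_zero {σ : Type*} (t : List σ) : npow t 0 = [] := rfl
@[simp] lemma npow_succ {σ : Type*} (t : List σ) (n : ℕ) :
    npow t (n + 1) = t ++ npow t n := by simp [npow, List.replicate_succ]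

lemma npow_add {σ : Type*} (t : List σ) (m n : ℕ) :
    npow t (m + n) = npow t m ++ npow t n := by
  induction m with
  | zero => simp
  | succ m ih => rw [Nat.succ_add, npow_succ, npow_succ, ih, List.append_assoc]

lemma npow_prefix {σ : Type*} (t : List σ) {m n : ℕ} (h : m ≤ n) :
    npow t m <+: npow t n :=
  ⟨npow t (n - m), by rw [← npow_add]; congr 1; omega⟩

@[simp] lemma lcp_nil_left {σ : Type*} (q : List σ) : lcp [] q = [] := by cases q <;> rfl
@[simp] lemma lcp_nil_right {σ : Type*} (p : List σ) : lcp p [] = [] := by cases p <;> rfl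
lemma lcp_cons_pos {σ : Type*} (x : σ) (xs ys : List σ) :
    lcp (x :: xs) (x :: ys) = x :: lcp xs ys := by simp [lcp]
lemma lcp_cons_neg {σ : Type*} {x y : σ} (h : x ≠ y) (xs ys : List σ) :
    lcp (x :: xs) (y :: ys) = [] := by simp [lcp, h]

lemma lcp_append {σ : Type*} (s p q : List σ) :
    lcp (s ++ p) (s ++ q) = s ++ lcp p q := by
  induction s with
  | nil => simp
  | cons c s ih => simp [lcp_cons_pos, ih]

lemma lcp_head_ne {σ : Type*} {p q : List σ} (h : p.head? ≠ q.head?) : lcp p q = [] := by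
  cases p with
  | nil => simp
  | cons x xs => cases q with
    | nil => simp
    | cons y ys =>
      apply lcp_cons_neg
      simp at h; exact h

lemma head?_append_left {σ : Type*} {p : List σ} (q : List σ) (h : p ≠ []) :
    (p ++ q).head? = p.head? := by cases p <;> simp_all

lemma head?_of_prefix {σ : Type*} {u v : List σ} (h : u <+: v) (hu : u ≠ []) :
    u.head? = v.head? := by
  obtain ⟨w, rfl⟩ := h
  exact (head?_append_left w hu).symm

lemma decomp {α : Type*} : ∀ (p q : List α), p <+: q ∨ q <+: p ∨
    ∃ s c d u v, c ≠ d ∧ p = s ++ c :: u ∧ q = s ++ d :: v := by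
  intro p
  induction p with
  | nil => intro q; exact Or.inl (List.nil_prefix)
  | cons c p ih =>
    intro q
    cases q with
    | nil => exact Or.inr (Or.inl (List.nil_prefix))
    | cons d q =>
      by_cases hcd : c = d
      · subst hcd
        rcases ih q with h | h | ⟨s, c', d', u, v, hne, rfl, rfl⟩
        · exact Or.inl (by simpa [List.cons_prefix_cons] using h)
        · exact Or.inr (Or.inl (by simpa [List.cons_prefix_cons] using h))
        · exact Or.inr (Or.inr ⟨c :: s, c', d', u, v, hne, rfl, rfl⟩)
      · exact Or.inr (Or.inr ⟨[], c, d, p, q, hcd, rfl, rfl⟩)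

end W15

namespace W15

def tr1 : List Ltr → List Ltr
  | [] => []
  | Ltr.a :: w => Ltr.a :: tr1 w
  | Ltr.b :: w => Ltr.a :: Ltr.b :: tr1 w

def tr2 : List Ltr → List Ltr
  | [] => []
  | Ltr.a :: w => Ltr.b :: Ltr.a :: tr2 w
  | Ltr.b :: w => Ltr.b :: tr2 w

@[simp] lemma two_a {σ : Type*} (x y : List σ) : two x y Ltr.a = x := rfl
@[simp] lemma two_b {σ : Type*} (x y : List σ) : two x y Ltr.b = y := rfl

lemma mapp_tr1 {σ : Type*} (x t : List σ) : ∀ w,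
    mapp (two x (x ++ t)) w = mapp (two x t) (tr1 w) := by
  intro w
  induction w with
  | nil => rfl
  | cons c w ih =>
    cases c <;> simp [tr1, ih, List.append_assoc]

lemma mapp_tr2 {σ : Type*} (y t : List σ) : ∀ w,
    mapp (two (y ++ t) y) w = mapp (two t y) (tr2 w) := by
  intro w
  induction w with
  | nil => rfl
  | cons c w ih =>
    cases c <;> simp [tr2, ih, List.append_assoc]

lemma mapp_two_same {σ : Type*} (x : List σ) : ∀ w, mapp (two x x) w = npow x w.length := by
  intro w
  induction w with
  | nil => rfl
  | cons c w ih => cases c <;> simp [ih]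

lemma comparable_same {σ : Type*} (x : List σ) (w1 w2 : List Ltr) :
    (x ++ mapp (two x x) w1 <+: x ++ mapp (two x x) w2) ∨
    (x ++ mapp (two x x) w2 <+: x ++ mapp (two x x) w1) := by
  rw [mapp_two_same, mapp_two_same, ← npow_succ, ← npow_succ]
  rcases le_total (w1.length + 1) (w2.length + 1) with h | h
  · exact Or.inl (npow_prefix x h)
  · exact Or.inr (npow_prefix x h)

lemma lemP {σ : Type*} : ∀ (n : ℕ) (x y p q : List σ),
    p.length + q.length ≤ n → x ≠ [] → y ≠ [] →
    (∃ w, p = x ++ mapp (two x y) w) → (∃ w, q = y ++ mapp (two x y) w) →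
    ¬ (p <+: q) → ¬ (q <+: p) →
    lcp p q = lcp (x ++ y) (y ++ x) := by
  intro n
  induction n with
  | zero =>
    intro x y p q hlen hx _ hp _ _ _
    obtain ⟨w1, rfl⟩ := hp
    cases x with
    | nil => exact absurd rfl hx
    | cons c xs => simp at hlen
  | succ n ih =>
    intro x y p q hlen hx hy hp hq hpq hqp
    obtain ⟨w1, rfl⟩ := hp
    obtain ⟨w2, rfl⟩ := hq
    have hxlen : 1 ≤ x.length := List.length_pos_iff.mpr hx
    have hylen : 1 ≤ y.length := List.length_pos_iff.mpr hy
    rcases decomp x y with hxy | hyx | ⟨s, c, d, u, v, hcd, rfl, rfl⟩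
    · -- x <+: y
      obtain ⟨t, rfl⟩ := hxy
      by_cases ht : t = []
      · subst ht
        rw [List.append_nil] at hpq hqp
        rcases comparable_same x w1 w2 with h | h
        · exact absurd h hpq
        · exact absurd h hqp
      · cases w1 with
        | nil =>
          exact absurd ⟨t ++ mapp (two x (x ++ t)) w2, by simp⟩ hpq
        | cons c w1' =>
          set P := mapp (two x (x ++ t)) (c :: w1') with hPdef
          set Q := mapp (two x (x ++ t)) w2 with hQdef
          have keyP : ∃ w, P = x ++ mapp (two x t) w := by
            cases c
            · exact ⟨tr1 w1', by rw [hPdef, mapp_cons, two_a, mapp_tr1]⟩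
            · refine ⟨Ltr.b :: tr1 w1', ?_⟩
              rw [hPdef, mapp_cons, two_b, mapp_cons, two_b, mapp_tr1, List.append_assoc]
          have keyQ : ∃ w, t ++ Q = t ++ mapp (two x t) w :=
            ⟨tr1 w2, by rw [hQdef, mapp_tr1]⟩
          have hlen' : P.length + (t ++ Q).length ≤ n := by
            have h1 : (x ++ P).length + ((x ++ t) ++ Q).length ≤ n + 1 := hlen
            simp [List.length_append] at h1 ⊢
            omega
          have hpq' : ¬ (P <+: t ++ Q) := by
            intro hcon
            exact hpq (by
              rw [List.append_assoc]
              exact (List.prefix_append_right_inj x).mpr hcon)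
          have hqp' : ¬ (t ++ Q <+: P) := by
            intro hcon
            exact hqp (by
              rw [List.append_assoc]
              exact (List.prefix_append_right_inj x).mpr hcon)
          have ihres := ih x t P (t ++ Q) hlen' hx ht keyP keyQ hpq' hqp'
          calc lcp (x ++ P) ((x ++ t) ++ Q)
              = lcp (x ++ P) (x ++ (t ++ Q)) := by rw [List.append_assoc]
            _ = x ++ lcp P (t ++ Q) := lcp_append x P (t ++ Q)
            _ = x ++ lcp (x ++ t) (t ++ x) := by rw [ihres]
            _ = lcp (x ++ (x ++ t)) (x ++ (t ++ x)) := (lcp_append x (x ++ t) (t ++ x)).symm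
            _ = lcp (x ++ (x ++ t)) ((x ++ t) ++ x) := by rw [List.append_assoc]
    · -- y <+: x
      obtain ⟨t, rfl⟩ := hyx
      by_cases ht : t = []
      · subst ht
        rw [List.append_nil] at hpq hqp hx
        rcases comparable_same y w1 w2 with h | h
        · exact absurd h hpq
        · exact absurd h hqp
      · cases w2 with
        | nil =>
          exact absurd ⟨t ++ mapp (two (y ++ t) y) w1, by simp⟩ hqp
        | cons c w2' =>
          set P := mapp (two (y ++ t) y) w1 with hPdef
          set Q := mapp (two (y ++ t) y) (c :: w2') with hQdef
          have keyP : ∃ w, t ++ P = t ++ mapp (two t y) w :=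
            ⟨tr2 w1, by rw [hPdef, mapp_tr2]⟩
          have keyQ : ∃ w, Q = y ++ mapp (two t y) w := by
            cases c
            · refine ⟨Ltr.a :: tr2 w2', ?_⟩
              rw [hQdef, mapp_cons, two_a, mapp_cons, two_a, mapp_tr2, List.append_assoc]
            · exact ⟨tr2 w2', by rw [hQdef, mapp_cons, two_b, mapp_tr2]⟩
          have hlen' : (t ++ P).length + Q.length ≤ n := by
            have h1 : ((y ++ t) ++ P).length + (y ++ Q).length ≤ n + 1 := hlen
            simp [List.length_append] at h1 ⊢
            omega
          have hpq' : ¬ (t ++ P <+: Q) := by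
            intro hcon
            exact hpq (by
              rw [List.append_assoc]
              exact (List.prefix_append_right_inj y).mpr hcon)
          have hqp' : ¬ (Q <+: t ++ P) := by
            intro hcon
            exact hqp (by
              rw [List.append_assoc]
              exact (List.prefix_append_right_inj y).mpr hcon)
          have ihres := ih t y (t ++ P) Q hlen' ht hy keyP keyQ hpq' hqp'
          calc lcp ((y ++ t) ++ P) (y ++ Q)
              = lcp (y ++ (t ++ P)) (y ++ Q) := by rw [List.append_assoc]
            _ = y ++ lcp (t ++ P) Q := lcp_append y (t ++ P) Q
            _ = y ++ lcp (t ++ y) (y ++ t) := by rw [ihres]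
            _ = lcp (y ++ (t ++ y)) (y ++ (y ++ t)) := (lcp_append y (t ++ y) (y ++ t)).symm
            _ = lcp ((y ++ t) ++ y) (y ++ (y ++ t)) := by rw [List.append_assoc]
    · -- x, y incomparable
      have L : ∀ A B : List σ, lcp (s ++ (c :: A)) (s ++ (d :: B)) = s := by
        intro A B
        rw [lcp_append, lcp_cons_neg hcd, List.append_nil]
      have e1 : (s ++ c :: u) ++ mapp (two (s ++ c :: u) (s ++ d :: v)) w1
          = s ++ (c :: (u ++ mapp (two (s ++ c :: u) (s ++ d :: v)) w1)) := by
        simp [List.append_assoc]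
      have e2 : (s ++ d :: v) ++ mapp (two (s ++ c :: u) (s ++ d :: v)) w2
          = s ++ (d :: (v ++ mapp (two (s ++ c :: u) (s ++ d :: v)) w2)) := by
        simp [List.append_assoc]
      rw [e1, e2, L]
      have e3 : (s ++ c :: u) ++ (s ++ d :: v) = s ++ (c :: (u ++ (s ++ d :: v))) := by
        simp [List.append_assoc]
      have e4 : (s ++ d :: v) ++ (s ++ c :: u) = s ++ (d :: (v ++ (s ++ c :: u))) := by
        simp [List.append_assoc]
      rw [e3, e4, L]

end W15

namespace W15

lemma len_allb {σ : Type*} (g : Ltr → List σ) : ∀ s : List Ltr, (∀ c ∈ s, c = Ltr.b) →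
    (mapp g s).length = s.length * (g Ltr.b).length := by
  intro s
  induction s with
  | nil => simp
  | cons c s ih =>
    intro hall
    have hc := hall c (by simp)
    subst hc
    rw [mapp_cons, List.length_append, ih (fun c hc => hall c (by simp [hc]))]
    simp [List.length_cons, Nat.succ_mul]
    omega

lemma aux {σ : Type*} (g h : Ltr → List σ) (hg : Marked g) (hh : ¬ Marked h)
    (hlenb : (g Ltr.b).length < (h Ltr.b).length)
    (s u v : List Ltr)
    (hα : MinEl g h (s ++ Ltr.a :: u)) (hβ : MinEl g h (s ++ Ltr.b :: v)) :
    ∃ s' νa νb : List Ltr, s' ≠ [] ∧ νa ≠ [] ∧ νb ≠ [] ∧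
      Ltr.a ∈ s' ∧ νa.head? = some Ltr.a ∧ νb.head? = some Ltr.b ∧
      MinEl g h (s' ++ νa) ∧ MinEl g h (s' ++ νb) ∧ s' ++ νa ≠ s' ++ νb ∧
      mapp g s' = mapp h s' ++ zh h ∧
      zh h ++ mapp g νa = mapp h νa ∧
      zh h ++ mapp g νb = mapp h νb := by
  obtain ⟨hga, hgb, hghead⟩ := hg
  set νa := Ltr.a :: u with hνa_def
  set νb := Ltr.b :: v with hνb_def
  have hEa : mapp g s ++ mapp g νa = mapp h s ++ mapp h νa := by
    have := hα.2.1
    simpa [EqSet, mapp_append] using this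
  have hEb : mapp g s ++ mapp g νb = mapp h s ++ mapp h νb := by
    have := hβ.2.1
    simpa [EqSet, mapp_append] using this
  have hgνa_ne : mapp g νa ≠ [] := by simp [hνa_def, hga]
  have hgνb_ne : mapp g νb ≠ [] := by simp [hνb_def, hgb]
  have hgνa_head : (mapp g νa).head? = (g Ltr.a).head? := by
    rw [hνa_def, mapp_cons]; exact head?_append_left _ hga
  have hgνb_head : (mapp g νb).head? = (g Ltr.b).head? := by
    rw [hνb_def, mapp_cons]; exact head?_append_left _ hgb
  have hne_heads : (mapp g νa).head? ≠ (mapp g νb).head? := by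
    rw [hgνa_head, hgνb_head]; exact hghead
  -- g(s) = h(s) ++ z
  obtain ⟨z, hz⟩ : ∃ z, mapp g s = mapp h s ++ z := by
    have p1 : mapp g s <+: mapp g s ++ mapp g νa := ⟨mapp g νa, rfl⟩
    have p2 : mapp h s <+: mapp g s ++ mapp g νa := by
      rw [hEa]; exact ⟨mapp h νa, rfl⟩
    rcases List.prefix_or_prefix_of_prefix p1 p2 with h1 | h2
    · obtain ⟨t, ht⟩ := h1
      by_cases htn : t = []
      · exact ⟨[], by simp [← ht, htn]⟩
      · exfalso
        have ea : mapp g νa = t ++ mapp h νa := by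
          have := hEa
          rw [← ht, List.append_assoc] at this
          exact List.append_cancel_left this
        have eb : mapp g νb = t ++ mapp h νb := by
          have := hEb
          rw [← ht, List.append_assoc] at this
          exact List.append_cancel_left this
        apply hne_heads
        rw [ea, eb, head?_append_left _ htn, head?_append_left _ htn]
    · obtain ⟨z', hz'⟩ := h2
      exact ⟨z', hz'.symm⟩
  have hza : z ++ mapp g νa = mapp h νa := by
    have := hEa
    rw [hz, List.append_assoc] at this
    exact List.append_cancel_left this
  have hzb : z ++ mapp g νb = mapp h νb := by
    have := hEb
    rw [hz, List.append_assoc] at this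
    exact List.append_cancel_left this
  have hinc1 : ¬ (mapp h νa <+: mapp h νb) := by
    intro hcon
    rw [← hza, ← hzb] at hcon
    have hpre := (List.prefix_append_right_inj z).mp hcon
    exact hne_heads (head?_of_prefix hpre hgνa_ne)
  have hinc2 : ¬ (mapp h νb <+: mapp h νa) := by
    intro hcon
    rw [← hza, ← hzb] at hcon
    have hpre := (List.prefix_append_right_inj z).mp hcon
    exact hne_heads (head?_of_prefix hpre hgνb_ne).symm
  have hhb : h Ltr.b ≠ [] := by
    intro e; rw [e] at hlenb; simp at hlenb
  have hha : h Ltr.a ≠ [] := by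
    intro e
    have pow : ∀ w : List Ltr, ∃ k, mapp h w = npow (h Ltr.b) k := by
      intro w
      induction w with
      | nil => exact ⟨0, rfl⟩
      | cons c w ih =>
        obtain ⟨k, hk⟩ := ih
        cases c
        · exact ⟨k, by rw [mapp_cons, e, List.nil_append, hk]⟩
        · exact ⟨k + 1, by rw [mapp_cons, hk, npow_succ]⟩
    obtain ⟨k1, h1⟩ := pow νa
    obtain ⟨k2, h2⟩ := pow νb
    rcases le_total k1 k2 with hle | hle
    · exact hinc1 (by rw [h1, h2]; exact npow_prefix _ hle)
    · exact hinc2 (by rw [h1, h2]; exact npow_prefix _ hle)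
  have hheads_h : (h Ltr.a).head? = (h Ltr.b).head? := by
    by_contra hne; exact hh ⟨hha, hhb, hne⟩
  have hs_ne : s ≠ [] := by
    intro e; subst e
    have e1 : mapp g νa = mapp h νa := by simpa using hEa
    have e2 : mapp g νb = mapp h νb := by simpa using hEb
    have hhνa_head : (mapp h νa).head? = (h Ltr.a).head? := by
      rw [hνa_def, mapp_cons]; exact head?_append_left _ hha
    have hhνb_head : (mapp h νb).head? = (h Ltr.b).head? := by
      rw [hνb_def, mapp_cons]; exact head?_append_left _ hhb
    apply hghead
    rw [← hgνa_head, ← hgνb_head, e1, e2, hhνa_head, hhνb_head]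
    exact hheads_h
  have htwo : two (h Ltr.a) (h Ltr.b) = h := by funext c; cases c <;> rfl
  have hz_eq : z = zh h := by
    have m1 : ∃ w, mapp h νa = h Ltr.a ++ mapp (two (h Ltr.a) (h Ltr.b)) w :=
      ⟨u, by rw [htwo, hνa_def, mapp_cons]⟩
    have m2 : ∃ w, mapp h νb = h Ltr.b ++ mapp (two (h Ltr.a) (h Ltr.b)) w :=
      ⟨v, by rw [htwo, hνb_def, mapp_cons]⟩
    have key := lemP ((mapp h νa).length + (mapp h νb).length) (h Ltr.a) (h Ltr.b)
      (mapp h νa) (mapp h νb) le_rfl hha hhb m1 m2 hinc1 hinc2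
    have l2 : lcp (mapp h νa) (mapp h νb) = z := by
      rw [← hza, ← hzb, lcp_append, lcp_head_ne hne_heads, List.append_nil]
    rw [l2] at key
    simpa [zh] using key
  subst hz_eq
  have ha_mem : Ltr.a ∈ s := by
    by_contra hmem
    have hall : ∀ c ∈ s, c = Ltr.b := by
      intro c hc
      cases c
      · exact absurd hc hmem
      · rfl
    have lg := len_allb g s hall
    have lh := len_allb h s hall
    have hzl := congrArg List.length hz
    rw [List.length_append, lg, lh] at hzl
    have hpos : 0 < s.length := List.length_pos_iff.mpr hs_ne
    have hmul : s.length * (g Ltr.b).length < s.length * (h Ltr.b).length :=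
      mul_lt_mul_of_pos_left hlenb hpos
    omega
  refine ⟨s, νa, νb, hs_ne, by simp [hνa_def], by simp [hνb_def], ha_mem,
    by rw [hνa_def]; rfl, by rw [hνb_def]; rfl, hα, hβ, ?_, hz, hza, hzb⟩
  intro e
  have := List.append_cancel_left e
  rw [hνa_def, hνb_def] at this
  simp at this

end W15

/-- Structure of a counterexample: there are nonempty words `σ, ν_a, ν_b`
with `σ` containing the letter `a`, `ν_a` starting with `a`, `ν_b` starting with `b`, such
that `σν_a` and `σν_b` are distinct minimal elements of `E(g,h)`, and
`g(σ) = h(σ)z_h`, `z_h g(ν_a) = h(ν_a)`, `z_h g(ν_b) = h(ν_b)`. -/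
theorem stmt_15 {σ : Type*} (g h : Ltr → List σ) (hc : Counterexample g h) :
    ∃ s νa νb : List Ltr, s ≠ [] ∧ νa ≠ [] ∧ νb ≠ [] ∧
      Ltr.a ∈ s ∧ νa.head? = some Ltr.a ∧ νb.head? = some Ltr.b ∧
      MinEl g h (s ++ νa) ∧ MinEl g h (s ++ νb) ∧ s ++ νa ≠ s ++ νb ∧
      mapp g s = mapp h s ++ zh h ∧
      zh h ++ mapp g νa = mapp h νa ∧
      zh h ++ mapp g νb = mapp h νb := by
  obtain ⟨⟨α, β, hα, hβ, hne⟩, hg, hh, _, hlb⟩ := hc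
  have key : ∀ γ δ : List Ltr, MinEl g h γ → MinEl g h δ → γ ≠ δ → ¬ γ <+: δ := by
    rintro γ δ hγ hδ hne ⟨w, rfl⟩
    have hw : w ≠ [] := by
      intro e; subst e; simp at hne
    have hwEq : w ∈ EqSet g h := by
      have h1 : mapp g γ ++ mapp g w = mapp h γ ++ mapp h w := by
        have := hδ.2.1
        simpa [EqSet, W15.mapp_append] using this
      have h2 : mapp g γ = mapp h γ := hγ.2.1
      rw [h2] at h1
      exact List.append_cancel_left h1
    exact hδ.2.2 γ w hγ.1 hw hγ.2.1 hwEq rfl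
  rcases W15.decomp α β with h1 | h2 | ⟨s, c, d, u, v, hcd, rfl, rfl⟩
  · exact absurd h1 (key α β hα hβ hne)
  · exact absurd h2 (key β α hβ hα (Ne.symm hne))
  · cases c <;> cases d
    · exact absurd rfl hcd
    · exact W15.aux g h hg hh hlb s u v hα hβ
    · exact W15.aux g h hg hh hlb s v u hβ hα
    · exact absurd rfl hcd
end
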